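/- Let N, a, m, k', c be positive integers, ε' ≥ 0 and γ ∈ [0,1]. Let Ext: {0,1}^N → {0,1}^a be a (k',ε') oblivious bit-fixing extractor, let f: ({0,1}^a)^{m+1} → {0,1}, let ρ ∈ {0,1,⋆}^{(m+1)N} be a restriction (on m+1 blocks of N coordinates each) leaving at least k' coordinates free in each of the m+1 blocks, and let g: ({0,1}^N)^{m+1} → {0,1}. Suppose the restricted function g|_ρ is computed with error at most γ by a randomized (m+1)-party number-on-forehead protocol exchanging c bits (with party i's forehead holding the i-th block of N coordinates); that is, there is a probability distribution over deterministic c-bit (m+1)-party NOF protocols P such that for every input X ∈ ({0,1}^N)^{m+1}, Pr_P[P(X) ≠ g|_ρ(X)] ≤ γ. Then corr((f∘Ext^{m+1})|_ρ, g|_ρ) ≤ 2γ + 2^c · (R_{m+1}(f) + 4(m+1)ε')^{1/2^{m+1}}, where (f∘Ext^{m+1})|_ρ(X_1,…,X_{m+1}) = f(Ext(Y_1),…,Ext(Y_{m+1})) with Y_i agreeing with ρ on the fixed coordinates of block i and with X_i on the free coordinates, the correlation is over uniform X ∈ ({0,1}^N)^{m+1}, and the base R_{m+1}(f) + 4(m+1)ε'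 of the (1/2^{m+1})-th power is nonnegative. -/

import Mathlib

/-- `(-1)^v` for a bit `v : ZMod 2`. -/
noncomputable def pm1 (v : ZMod 2) : ℝ := if v = 1 then -1 else 1

/-- Correlation of two Boolean functions over the uniform distribution. -/
noncomputable def corr {α : Type*} [Fintype α] (f g : α → ZMod 2) : ℝ :=
  |(∑ x : α, pm1 (f x + g x)) / (Fintype.card α : ℝ)|

/-- Two distributions are `ε`-close: all events get probabilities within `ε`. -/
def CloseTo {α : Type*} [Fintype α] (p q : α → ℝ) (ε : ℝ) : Prop :=
  ∀ S : Finset α, |∑ x ∈ S, p x - ∑ x ∈ S, q x| ≤ ε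

/-- Pushforward of a distribution along a map. -/
noncomputable def push {α β : Type*} [Fintype α] [DecidableEq β] (h : α → β) (p : α → ℝ) :
    β → ℝ :=
  fun y => ∑ x : α, if h x = y then p x else 0

/-- The uniform distribution on a finite type. -/
noncomputable def unif (α : Type*) [Fintype α] : α → ℝ := fun _ => (Fintype.card α : ℝ)⁻¹

/-- Fill the free (`none`) coordinates of a restriction `σ` using `x`. -/
def fill {N : ℕ} (σ : Fin N → Option (ZMod 2)) (x : Fin N → ZMod 2) : Fin N → ZMod 2 :=
  fun j => (σ j).getD (x j)

/-- `Ext` is a `(k', ε')` oblivious bit-fixing source extractor. -/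
def OBFExtractor {N a : ℕ} (Ext : (Fin N → ZMod 2) → (Fin a → ZMod 2))
    (k' : ℕ) (ε' : ℝ) : Prop :=
  ∀ σ : Fin N → Option (ZMod 2),
    k' ≤ (Finset.univ.filter (fun j => σ j = none)).card →
    CloseTo (push (fun x => Ext (fill σ x)) (unif (Fin N → ZMod 2)))
      (unif (Fin a → ZMod 2)) ε'

/-- The `m`-party norm of `g : ({0,1}^b)^m → {0,1}`. -/
noncomputable def partyNorm (m b : ℕ) (g : (Fin m → (Fin b → ZMod 2)) → ZMod 2) : ℝ :=
  (∑ X0 : Fin m → Fin b → ZMod 2, ∑ X1 : Fin m → Fin b → ZMod 2,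
      pm1 (∑ δ : Fin m → Bool, g (fun i => if δ i then X1 i else X0 i))) /
    ((Fintype.card (Fin m → Fin b → ZMod 2) : ℝ)) ^ 2

/-- A deterministic `c`-bit `k`-party number-on-forehead protocol on inputs in
`({0,1}^N)^k`: for each transcript of previously sent bits there is a speaker and a
message that does not depend on the speaker's own block. -/
structure NOF (k N c : ℕ) where
  speaker : List (ZMod 2) → Fin k
  msg : List (ZMod 2) → (Fin k → (Fin N → ZMod 2)) → ZMod 2
  oblivious : ∀ τ X Y, (∀ j, j ≠ speaker τ → X j = Y j) → msg τ X = msg τ Y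

/-- The transcript of the first `t` transmitted bits. -/
def NOF.transcript {k N c : ℕ} (P : NOF k N c) (X : Fin k → (Fin N → ZMod 2)) :
    ℕ → List (ZMod 2)
  | 0 => []
  | t + 1 => P.transcript X t ++ [P.msg (P.transcript X t) X]

/-- The output of the protocol: the `c`-th transmitted bit. -/
def NOF.out {k N c : ℕ} (P : NOF k N c) (X : Fin k → (Fin N → ZMod 2)) : ZMod 2 :=
  (P.transcript X c).getLastD 0


/-!
Write `F` for `pm1 ∘ f ∘ Ext^{m+1}` restricted by `ρ`. The cube norm of `F` is an average of a
`[-1,1]`-valued function of `2(m+1)` extractor outputs; these are independent, and each is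
`ε'`-close to uniform, so their joint law is within `ℓ¹`-distance `4(m+1)ε'` of uniform and
`R_{m+1}(F) ≤ R_{m+1}(f) + 4(m+1)ε'`. A deterministic `c`-bit protocol splits the inputs into
`2^c` cylinder intersections, and on each the Babai–Nisan–Szegedy inequality (one Cauchy–Schwarz
per party) bounds the correlation with `F` by `R_{m+1}(F)^{1/2^{m+1}}`. A randomized protocol
erring with probability at most `γ` on every input changes the correlation by at most `2γ`.
-/

open Finset
open scoped BigOperators

lemma ZMod.two_eq_zero_or_eq_one (u : ZMod 2) : u = 0 ∨ u = 1 := by revert u; decide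

lemma pm1_add (u v : ZMod 2) : pm1 (u + v) = pm1 u * pm1 v := by
  rcases u.two_eq_zero_or_eq_one with rfl | rfl <;>
    rcases v.two_eq_zero_or_eq_one with rfl | rfl <;> simp +decide [pm1]

lemma abs_pm1 (v : ZMod 2) : |pm1 v| = 1 := by
  unfold pm1; split_ifs <;> norm_num

lemma pm1_sum {ι : Type*} (s : Finset ι) (v : ι → ZMod 2) :
    pm1 (∑ i ∈ s, v i) = ∏ i ∈ s, pm1 (v i) := by
  classical
  induction s using Finset.induction with
  | empty => simp +decide [pm1]
  | insert i s hi ih => rw [sum_insert hi, prod_insert hi, pm1_add, ih]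

lemma abs_pm1_sub_pm1 (u v : ZMod 2) : |pm1 u - pm1 v| = if u = v then 0 else 2 := by
  rcases u.two_eq_zero_or_eq_one with rfl | rfl <;>
    rcases v.two_eq_zero_or_eq_one with rfl | rfl <;> norm_num +decide [pm1]

section Cube

variable {α : Type*} [Fintype α]

@[to_additive]
lemma Fin.prod_univ_pi_succ {M : Type*} [CommMonoid M] {k : ℕ} (F : (Fin (k + 1) → α) → M) :
    ∏ X, F X = ∏ x, ∏ X : Fin k → α, F (Fin.cons x X) := by
  rw [← Fintype.prod_equiv (Fin.consEquiv fun _ => α) (fun p => F (Fin.cons p.1 p.2)) F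
    (fun _ => rfl), Fintype.prod_prod_type]

lemma Fin.expect_univ_pi_succ {k : ℕ} (F : (Fin (k + 1) → α) → ℝ) :
    𝔼 X, F X = 𝔼 x, 𝔼 X : Fin k → α, F (Fin.cons x X) := by
  rw [← Fintype.expect_equiv (Fin.consEquiv fun _ => α) (fun p => F (Fin.cons p.1 p.2)) F
    (fun _ => rfl), ← univ_product_univ]
  exact expect_product' univ univ (fun x X => F (Fin.cons x X))

lemma pow_two_pow_expect_le {ι : Type*} (s : Finset ι) (Z : ι → ℝ) (k : ℕ) :
    (𝔼 i ∈ s, Z i) ^ 2 ^ k ≤ 𝔼 i ∈ s, Z i ^ 2 ^ k := by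
  induction k generalizing Z with
  | zero => simp
  | succ k ih =>
    have hsq : (𝔼 i ∈ s, Z i) ^ 2 ≤ 𝔼 i ∈ s, Z i ^ 2 := by
      simpa only [expect_eq_sum_div_card] using sum_div_card_sq_le_sum_sq_div_card
    calc (𝔼 i ∈ s, Z i) ^ 2 ^ (k + 1) = ((𝔼 i ∈ s, Z i) ^ 2) ^ 2 ^ k := by
          rw [pow_succ', pow_mul]
      _ ≤ (𝔼 i ∈ s, Z i ^ 2) ^ 2 ^ k := by gcongr
      _ ≤ 𝔼 i ∈ s, (Z i ^ 2) ^ 2 ^ k := ih _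
      _ = 𝔼 i ∈ s, Z i ^ 2 ^ (k + 1) := by simp_rw [← pow_mul, pow_succ']

def sel {k : ℕ} {β : Type*} (δ : Fin k → Bool) (X₀ X₁ : Fin k → β) : Fin k → β :=
  fun i => if δ i then X₁ i else X₀ i

lemma sel_cons {k : ℕ} {β : Type*} (b : Bool) (δ : Fin k → Bool) (x₀ x₁ : β)
    (X₀ X₁ : Fin k → β) :
    sel (Fin.cons b δ) (Fin.cons x₀ X₀) (Fin.cons x₁ X₁) =
      Fin.cons (if b then x₁ else x₀) (sel δ X₀ X₁) := by
  funext i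
  refine Fin.cases ?_ (fun j => ?_) i <;> simp [sel]

/-- The `2^k`-th power of the box norm: the paper's `R_k`, for real-valued functions. -/
noncomputable def cubeNorm (k : ℕ) (h : (Fin k → α) → ℝ) : ℝ :=
  𝔼 X₀, 𝔼 X₁, ∏ δ : Fin k → Bool, h (sel δ X₀ X₁)

lemma cubeNorm_succ {k : ℕ} (h : (Fin (k + 1) → α) → ℝ) :
    cubeNorm (k + 1) h =
      𝔼 x₀, 𝔼 x₁, cubeNorm k (fun X => h (Fin.cons x₀ X) * h (Fin.cons x₁ X)) := by
  have hprod : ∀ x₀ x₁ (X₀ X₁ : Fin k → α),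
      ∏ δ : Fin (k + 1) → Bool, h (sel δ (Fin.cons x₀ X₀) (Fin.cons x₁ X₁)) =
        ∏ δ : Fin k → Bool, h (Fin.cons x₀ (sel δ X₀ X₁)) * h (Fin.cons x₁ (sel δ X₀ X₁)) := by
    intro x₀ x₁ X₀ X₁
    simp only [Fin.prod_univ_pi_succ, Fintype.prod_bool, sel_cons, if_true, Bool.false_eq_true,
      if_false, ← prod_mul_distrib, mul_comm]
  simp only [cubeNorm, Fin.expect_univ_pi_succ (fun X₀ => 𝔼 X₁, _), Fin.expect_univ_pi_succ
    (fun X₁ => ∏ δ : Fin (k + 1) → Bool, h (sel δ _ X₁)), hprod]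
  exact expect_congr rfl fun x₀ _ => expect_comm _ _ _


/-- Cauchy–Schwarz in the first coordinate, on which `φ 0` does not depend. -/
lemma sq_expect_mul_prod_le [Nonempty α] {k : ℕ} (h : (Fin (k + 1) → α) → ℝ)
    (φ : Fin (k + 1) → (Fin (k + 1) → α) → ℝ) (hφ : ∀ X, |φ 0 X| ≤ 1)
    (hφ₀ : ∀ x y X, φ 0 (Fin.cons x X) = φ 0 (Fin.cons y X)) :
    (𝔼 X, h X * ∏ j, φ j X) ^ 2 ≤ 𝔼 x₀, 𝔼 x₁, 𝔼 X,
      (h (Fin.cons x₀ X) * h (Fin.cons x₁ X)) *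
        ∏ j : Fin k, (φ j.succ (Fin.cons x₀ X) * φ j.succ (Fin.cons x₁ X)) := by
  obtain ⟨z⟩ := ‹Nonempty α›
  set T : (Fin k → α) → ℝ :=
    fun X => 𝔼 x, h (Fin.cons x X) * ∏ j : Fin k, φ j.succ (Fin.cons x X)
  have hsplit : 𝔼 X, h X * ∏ j, φ j X = 𝔼 X, φ 0 (Fin.cons z X) * T X := by
    rw [Fin.expect_univ_pi_succ, expect_comm]
    refine expect_congr rfl fun X _ => ?_
    rw [mul_expect]
    refine expect_congr rfl fun x _ => ?_
    rw [Fin.prod_univ_succ, hφ₀ x z X]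
    ring
  have hT : 𝔼 X, T X ^ 2 = 𝔼 x₀, 𝔼 x₁, 𝔼 X, (h (Fin.cons x₀ X) * h (Fin.cons x₁ X)) *
      ∏ j : Fin k, (φ j.succ (Fin.cons x₀ X) * φ j.succ (Fin.cons x₁ X)) := by
    simp only [T, sq, expect_mul_expect, prod_mul_distrib]
    rw [expect_comm]
    refine expect_congr rfl fun x₀ _ => (expect_comm _ _ _).trans ?_
    exact expect_congr rfl fun x₁ _ => expect_congr rfl fun X _ => by ring
  rw [hsplit, ← hT]
  refine (expect_mul_sq_le_sq_mul_sq _ _ _).trans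
    (mul_le_of_le_one_left (expect_nonneg fun _ _ => sq_nonneg _)
      (expect_le univ_nonempty fun X _ => ?_))
  simpa [sq_abs] using pow_le_one₀ (abs_nonneg _) (hφ (Fin.cons z X)) (n := 2)

/-- The Babai–Nisan–Szegedy inequality. -/
theorem pow_expect_mul_prod_le_cubeNorm [Nonempty α] (k : ℕ) (h : (Fin k → α) → ℝ)
    (φ : Fin k → (Fin k → α) → ℝ) (hφ : ∀ j X, |φ j X| ≤ 1)
    (hφj : ∀ j X Y, (∀ i, i ≠ j → X i = Y i) → φ j X = φ j Y) :
    (𝔼 X, h X * ∏ j, φ j X) ^ 2 ^ k ≤ cubeNorm k h := by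
  induction k with
  | zero => simpa [cubeNorm] using le_of_eq (congrArg h (Subsingleton.elim _ _))
  | succ k ih =>
    have hcons : ∀ j (x : α) (X Y : Fin k → α), (∀ i, i ≠ j → X i = Y i) →
        ∀ i, i ≠ j.succ →
          (Fin.cons x X : Fin (k + 1) → α) i = (Fin.cons x Y : Fin (k + 1) → α) i := by
      intro j x X Y hXY i hi
      induction i using Fin.cases with
      | zero => rfl
      | succ i => exact hXY i fun h => hi (h ▸ rfl)
    have hCS := sq_expect_mul_prod_le h φ (hφ 0) fun x y X =>
      hφj 0 _ _ fun i hi => by obtain ⟨i, rfl⟩ := Fin.exists_succ_eq.2 hi; rfl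
    calc (𝔼 X, h X * ∏ j, φ j X) ^ 2 ^ (k + 1)
        = ((𝔼 X, h X * ∏ j, φ j X) ^ 2) ^ 2 ^ k := by rw [pow_succ', pow_mul]
      _ ≤ (𝔼 x₀, 𝔼 x₁, 𝔼 X, (h (Fin.cons x₀ X) * h (Fin.cons x₁ X)) *
            ∏ j : Fin k, (φ j.succ (Fin.cons x₀ X) * φ j.succ (Fin.cons x₁ X))) ^ 2 ^ k := by
        gcongr
      _ ≤ 𝔼 x₀, 𝔼 x₁, (𝔼 X, (h (Fin.cons x₀ X) * h (Fin.cons x₁ X)) *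
            ∏ j : Fin k, (φ j.succ (Fin.cons x₀ X) * φ j.succ (Fin.cons x₁ X))) ^ 2 ^ k :=
        (pow_two_pow_expect_le _ _ _).trans
          (expect_le_expect fun _ _ => pow_two_pow_expect_le _ _ _)
      _ ≤ 𝔼 x₀, 𝔼 x₁, cubeNorm k fun X => h (Fin.cons x₀ X) * h (Fin.cons x₁ X) := by
        refine expect_le_expect fun x₀ _ => expect_le_expect fun x₁ _ => ih _ _ ?_ ?_
        · intro j X
          rw [abs_mul]
          exact mul_le_one₀ (hφ _ _) (abs_nonneg _) (hφ _ _)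
        · intro j X Y hXY
          rw [hφj j.succ _ _ (hcons j x₀ X Y hXY), hφj j.succ _ _ (hcons j x₁ X Y hXY)]
      _ = cubeNorm (k + 1) h := (cubeNorm_succ h).symm

lemma cubeNorm_nonneg [Nonempty α] {k : ℕ} (h : (Fin (k + 1) → α) → ℝ) :
    0 ≤ cubeNorm (k + 1) h :=
  (Even.pow_nonneg (by simp [pow_succ]) _).trans
    (pow_expect_mul_prod_le_cubeNorm _ h (fun _ _ => 1) (by simp) fun _ _ _ _ => rfl)

end Cube

lemma Fin.sum_univ_pi_snoc {α M : Type*} [Fintype α] [AddCommMonoid M] {n : ℕ}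
    (F : (Fin (n + 1) → α) → M) :
    ∑ X, F X = ∑ X : Fin n → α, ∑ x, F (Fin.snoc X x) := by
  rw [← Fintype.sum_equiv (Fin.snocEquiv fun _ => α) (fun p => F (Fin.snoc p.2 p.1)) F
    (fun _ => rfl), Fintype.sum_prod_type, sum_comm]

lemma List.ofFn_snoc {α : Type*} {n : ℕ} (τ : Fin n → α) (b : α) :
    List.ofFn (Fin.snoc τ b : Fin (n + 1) → α) = List.ofFn τ ++ [b] := by
  rw [List.ofFn_succ', List.concat_eq_append]
  simp

namespace NOF

variable {k N c : ℕ} (P : NOF k N c)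

noncomputable def agrees {n : ℕ} (τ : Fin n → ZMod 2) (t : Fin n)
    (X : Fin k → Fin N → ZMod 2) : ℝ :=
  if P.msg ((List.ofFn τ).take t) X = τ t then 1 else 0

lemma agrees_snoc {n : ℕ} (τ : Fin n → ZMod 2) (b : ZMod 2) (X : Fin k → Fin N → ZMod 2) :
    ∏ t, P.agrees (Fin.snoc τ b : Fin (n + 1) → ZMod 2) t X =
      (∏ t, P.agrees τ t X) * if P.msg (List.ofFn τ) X = b then 1 else 0 := by
  rw [Fin.prod_univ_castSucc]
  congr 1
  · refine prod_congr rfl fun t _ => ?_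
    rw [agrees, agrees, List.ofFn_snoc, List.take_append_of_le_length (by simp [t.isLt.le])]
    simp
  · rw [agrees, List.ofFn_snoc]
    simp

lemma apply_transcript_eq_sum (X : Fin k → Fin N → ZMod 2) (n : ℕ) (G : List (ZMod 2) → ℝ) :
    G (P.transcript X n) = ∑ τ : Fin n → ZMod 2, G (List.ofFn τ) * ∏ t, P.agrees τ t X := by
  induction n generalizing G with
  | zero => simp [transcript]
  | succ n ih =>
    rw [transcript, ih fun L => G (L ++ [P.msg L X]), Fin.sum_univ_pi_snoc]
    refine sum_congr rfl fun τ _ => ?_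
    simp only [agrees_snoc, List.ofFn_snoc, mul_ite, mul_one, mul_zero, sum_ite_eq,
      mem_univ, if_true]

noncomputable def cylinder (τ : Fin c → ZMod 2) (j : Fin k) (X : Fin k → Fin N → ZMod 2) : ℝ :=
  ∏ t ∈ univ.filter fun t : Fin c => P.speaker ((List.ofFn τ).take t) = j,
    P.agrees τ t X

lemma prod_cylinder (τ : Fin c → ZMod 2) (X : Fin k → Fin N → ZMod 2) :
    ∏ j, P.cylinder τ j X = ∏ t, P.agrees τ t X :=
  prod_fiberwise univ _ _

lemma abs_cylinder_le (τ : Fin c → ZMod 2) (j : Fin k) (X : Fin k → Fin N → ZMod 2) :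
    |P.cylinder τ j X| ≤ 1 := by
  rw [cylinder, abs_prod]
  refine prod_le_one (fun _ _ => abs_nonneg _) fun t _ => ?_
  unfold agrees; split_ifs <;> norm_num

lemma cylinder_congr (τ : Fin c → ZMod 2) (j : Fin k) (X Y : Fin k → Fin N → ZMod 2)
    (hXY : ∀ i, i ≠ j → X i = Y i) : P.cylinder τ j X = P.cylinder τ j Y := by
  refine prod_congr rfl fun t ht => ?_
  rw [mem_filter] at ht
  rw [agrees, agrees, P.oblivious _ X Y fun i hi => hXY i (ht.2 ▸ hi)]

end NOF

lemma abs_le_rpow_of_pow_le {u B : ℝ} {k : ℕ} (hk : k ≠ 0) (h : u ^ 2 ^ k ≤ B) :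
    |u| ≤ B ^ ((1 : ℝ) / 2 ^ k) := by
  have hpow : |u| ^ 2 ^ k ≤ B := by
    rwa [Even.pow_abs ((Nat.even_pow' hk).2 even_two)]
  calc |u| = (|u| ^ 2 ^ k) ^ ((1 : ℝ) / 2 ^ k) := by
        have hexp : (1 : ℝ) / 2 ^ k = ((2 ^ k : ℕ) : ℝ)⁻¹ := by push_cast; ring
        rw [hexp, Real.pow_rpow_inv_natCast (abs_nonneg u) (by positivity)]
    _ ≤ B ^ ((1 : ℝ) / 2 ^ k) := by gcongr

/-- The Viola–Wigderson bound: a `c`-bit protocol splits `{0,1}^{Nk}` into `2^c` cylinder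
intersections, on each of which the BNS inequality applies. -/
theorem NOF.abs_expect_mul_pm1_out_le {k N c : ℕ} (P : NOF k N c)
    (h : (Fin k → Fin N → ZMod 2) → ℝ) :
    |𝔼 X, h X * pm1 (P.out X)| ≤ 2 ^ c * cubeNorm k h ^ ((1 : ℝ) / 2 ^ k) := by
  have hk : k ≠ 0 := (P.speaker []).pos.ne'
  have hdecomp : 𝔼 X, h X * pm1 (P.out X) = ∑ τ : Fin c → ZMod 2,
      pm1 ((List.ofFn τ).getLastD 0) * 𝔼 X, h X * ∏ j, P.cylinder τ j X := by
    simp only [NOF.out, P.apply_transcript_eq_sum _ c fun L => pm1 (L.getLastD 0),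
      mul_sum, mul_expect, NOF.prod_cylinder]
    rw [expect_sum_comm]
    exact sum_congr rfl fun τ _ => expect_congr rfl fun X _ => by ring
  calc |𝔼 X, h X * pm1 (P.out X)|
      ≤ ∑ τ : Fin c → ZMod 2, |pm1 ((List.ofFn τ).getLastD 0) *
          𝔼 X, h X * ∏ j, P.cylinder τ j X| := hdecomp ▸ abs_sum_le_sum_abs _ _
    _ ≤ ∑ _τ : Fin c → ZMod 2, cubeNorm k h ^ ((1 : ℝ) / 2 ^ k) := by
      refine sum_le_sum fun τ _ => ?_
      rw [abs_mul, abs_pm1, one_mul]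
      exact abs_le_rpow_of_pow_le hk (pow_expect_mul_prod_le_cubeNorm k h _
        (P.abs_cylinder_le τ) (P.cylinder_congr τ))
    _ = 2 ^ c * cubeNorm k h ^ ((1 : ℝ) / 2 ^ k) := by simp [card_univ]

section Distributions

variable {α β : Type*} [Fintype α] [Fintype β]

lemma CloseTo.sum_abs_sub_le {p q : α → ℝ} {ε : ℝ} (h : CloseTo p q ε) :
    ∑ x, |p x - q x| ≤ 2 * ε := by
  classical
  have hS := h (univ.filter fun x => q x ≤ p x)
  have hSc := h (univ.filter fun x => ¬ q x ≤ p x)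
  rw [← sum_sub_distrib] at hS hSc
  rw [← sum_filter_add_sum_filter_not univ fun x => q x ≤ p x]
  have hpos : ∑ x ∈ univ.filter (fun x => q x ≤ p x), |p x - q x| =
      ∑ x ∈ univ.filter (fun x => q x ≤ p x), (p x - q x) :=
    sum_congr rfl fun x hx => abs_of_nonneg (sub_nonneg.2 (mem_filter.1 hx).2)
  have hneg : ∑ x ∈ univ.filter (fun x => ¬ q x ≤ p x), |p x - q x| =
      -∑ x ∈ univ.filter (fun x => ¬ q x ≤ p x), (p x - q x) := by
    rw [← sum_neg_distrib]
    exact sum_congr rfl fun x hx =>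
      abs_of_neg (sub_neg.2 (not_le.1 (mem_filter.1 hx).2))
  rw [hpos, hneg]
  linarith [le_abs_self (∑ x ∈ univ.filter (fun x => q x ≤ p x), (p x - q x)),
    neg_abs_le (∑ x ∈ univ.filter (fun x => ¬ q x ≤ p x), (p x - q x))]

lemma sum_sum_abs_mul_sub_mul_le {p q : α → ℝ} {p' q' : β → ℝ} (hq : q ∈ stdSimplex ℝ α)
    (hp' : p' ∈ stdSimplex ℝ β) :
    ∑ a, ∑ b, |p a * p' b - q a * q' b| ≤ ∑ a, |p a - q a| + ∑ b, |p' b - q' b| := by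
  calc ∑ a, ∑ b, |p a * p' b - q a * q' b|
      ≤ ∑ a, ∑ b, (|p a - q a| * p' b + q a * |p' b - q' b|) := by
        gcongr with a _ b _
        calc |p a * p' b - q a * q' b| = |(p a - q a) * p' b + q a * (p' b - q' b)| := by ring_nf
          _ ≤ |(p a - q a) * p' b| + |q a * (p' b - q' b)| := abs_add_le _ _
          _ = |p a - q a| * p' b + q a * |p' b - q' b| := by
            rw [abs_mul, abs_mul, abs_of_nonneg (hp'.1 b), abs_of_nonneg (hq.1 a)]
    _ = ∑ a, |p a - q a| + ∑ b, |p' b - q' b| := by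
        simp only [sum_add_distrib, ← mul_sum, ← sum_mul, hp'.2, hq.2,
          mul_one, one_mul]

lemma prod_mem_stdSimplex {ι : Type*} [Fintype ι] [DecidableEq ι] {p : ι → β → ℝ}
    (hp : ∀ i, p i ∈ stdSimplex ℝ β) :
    (fun Z : ι → β => ∏ i, p i (Z i)) ∈ stdSimplex ℝ (ι → β) :=
  ⟨fun _ => prod_nonneg fun i _ => (hp i).1 _, by
    rw [← Fintype.prod_sum]; exact prod_eq_one fun i _ => (hp i).2⟩

lemma sum_abs_prod_sub_prod_le {n : ℕ} {p q : Fin n → β → ℝ} (hp : ∀ i, p i ∈ stdSimplex ℝ β)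
    (hq : ∀ i, q i ∈ stdSimplex ℝ β) :
    ∑ Z : Fin n → β, |∏ i, p i (Z i) - ∏ i, q i (Z i)| ≤ ∑ i, ∑ x, |p i x - q i x| := by
  induction n with
  | zero => simp
  | succ n ih =>
    simp only [Fin.sum_univ_pi_succ, Fin.prod_univ_succ, Fin.cons_zero, Fin.cons_succ,
      Fin.sum_univ_succ]
    have hsplit := sum_sum_abs_mul_sub_mul_le (p := p 0) (hq 0)
      (prod_mem_stdSimplex fun i : Fin n => hp i.succ)
      (q' := fun Z : Fin n → β => ∏ i, q i.succ (Z i))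
    exact hsplit.trans (add_le_add le_rfl (ih (fun i => hp i.succ) fun i => hq i.succ))

lemma unif_mem_stdSimplex [Nonempty α] : unif α ∈ stdSimplex ℝ α :=
  ⟨fun _ => by simp [unif], by simp [unif]⟩

lemma unif_pi {ι : Type*} [Fintype ι] [DecidableEq ι] (X : ι → α) :
    unif (ι → α) X = ∏ i, unif α (X i) := by
  simp [unif]

lemma expect_eq_sum_unif_mul (F : α → ℝ) : 𝔼 x, F x = ∑ x, unif α x * F x := by
  rw [Fintype.expect_eq_sum_div_card, sum_div]
  exact sum_congr rfl fun x _ => by rw [unif]; ring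

variable [DecidableEq β]

lemma sum_push_mul (e : α → β) (p : α → ℝ) (G : β → ℝ) :
    ∑ y, push e p y * G y = ∑ x, p x * G (e x) := by
  simp only [push, sum_mul, ite_mul, zero_mul]
  rw [sum_comm]
  simp

lemma push_mem_stdSimplex (e : α → β) {p : α → ℝ} (hp : p ∈ stdSimplex ℝ α) :
    push e p ∈ stdSimplex ℝ β :=
  ⟨fun _ => sum_nonneg fun x _ => by split_ifs <;> simp [hp.1 x], by
    simpa using (sum_push_mul e p fun _ => 1).trans (by simpa using hp.2)⟩

omit [Fintype β] in
lemma push_pi {ι : Type*} [Fintype ι] [DecidableEq ι] (e : ι → α → β) (p : ι → α → ℝ)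
    (Z : ι → β) :
    push (fun (X : ι → α) i => e i (X i)) (fun X => ∏ i, p i (X i)) Z =
      ∏ i, push (e i) (p i) (Z i) := by
  simp [push, Fintype.prod_sum, prod_ite_zero, funext_iff]

end Distributions

section CubeNormComp

variable {α β : Type*} [Fintype α] [Fintype β] [DecidableEq β] {k : ℕ}

lemma cubeNorm_eq_sum (h : (Fin k → α) → ℝ) :
    cubeNorm k h = ∑ X₀, ∑ X₁, unif _ X₀ * unif _ X₁ * ∏ δ : Fin k → Bool, h (sel δ X₀ X₁) := by
  simp only [cubeNorm, expect_eq_sum_unif_mul, mul_sum, mul_assoc]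

lemma cubeNorm_comp_eq_sum (H : (Fin k → β) → ℝ) (e : Fin k → α → β) :
    cubeNorm k (fun X => H fun i => e i (X i)) =
      ∑ Z₀, ∑ Z₁, push (fun X i => e i (X i)) (unif (Fin k → α)) Z₀ *
        push (fun X i => e i (X i)) (unif (Fin k → α)) Z₁ *
          ∏ δ : Fin k → Bool, H (sel δ Z₀ Z₁) := by
  set E : (Fin k → α) → Fin k → β := fun X i => e i (X i)
  set P := push E (unif (Fin k → α))
  set D : (Fin k → β) → (Fin k → β) → ℝ := fun Z₀ Z₁ => ∏ δ : Fin k → Bool, H (sel δ Z₀ Z₁)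
  have hsel : ∀ δ X₀ X₁, (fun i => e i (sel δ X₀ X₁ i)) = sel δ (E X₀) (E X₁) :=
    fun δ X₀ X₁ => by funext i; simp only [E, sel]; split_ifs <;> rfl
  calc cubeNorm k (fun X => H fun i => e i (X i))
      = ∑ X₀, unif _ X₀ * ∑ Z₁, P Z₁ * D (E X₀) Z₁ := by
        rw [cubeNorm_eq_sum]
        refine sum_congr rfl fun X₀ _ => ?_
        rw [sum_push_mul, mul_sum]
        simp only [hsel, D, mul_assoc]
    _ = ∑ Z₀, P Z₀ * ∑ Z₁, P Z₁ * D Z₀ Z₁ := (sum_push_mul E _ fun Z₀ => ∑ Z₁, P Z₁ * D Z₀ Z₁).symm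
    _ = _ := by simp only [mul_sum, mul_assoc, D]

lemma sum_abs_push_pi_sub_unif_le [Nonempty α] [Nonempty β] (e : Fin k → α → β) {ε : ℝ}
    (he : ∀ i, CloseTo (push (e i) (unif α)) (unif β) ε) :
    ∑ Z, |push (fun X i => e i (X i)) (unif (Fin k → α)) Z - unif (Fin k → β) Z| ≤
      k * (2 * ε) := by
  have hP : push (fun X i => e i (X i)) (unif (Fin k → α)) =
      fun Z => ∏ i, push (e i) (unif α) (Z i) := by
    funext Z
    rw [← push_pi]
    exact congrArg (push _ · Z) (funext unif_pi)
  simp only [hP, unif_pi]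
  refine (sum_abs_prod_sub_prod_le (fun i => push_mem_stdSimplex _ unif_mem_stdSimplex)
    fun _ => unif_mem_stdSimplex).trans ?_
  simpa using sum_le_sum (s := univ) fun i _ => (he i).sum_abs_sub_le

theorem abs_cubeNorm_comp_sub_le [Nonempty α] [Nonempty β] (H : (Fin k → β) → ℝ)
    (hH : ∀ Z, |H Z| ≤ 1) (e : Fin k → α → β) {ε : ℝ}
    (he : ∀ i, CloseTo (push (e i) (unif α)) (unif β) ε) :
    |cubeNorm k (fun X => H fun i => e i (X i)) - cubeNorm k H| ≤ 4 * k * ε := by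
  set P := push (fun X i => e i (X i)) (unif (Fin k → α))
  set Q := unif (Fin k → β)
  have hD : ∀ Z₀ Z₁, |∏ δ : Fin k → Bool, H (sel δ Z₀ Z₁)| ≤ 1 := fun Z₀ Z₁ => by
    rw [abs_prod]; exact prod_le_one (fun _ _ => abs_nonneg _) fun _ _ => hH _
  calc |cubeNorm k (fun X => H fun i => e i (X i)) - cubeNorm k H|
      = |∑ Z₀, ∑ Z₁, (P Z₀ * P Z₁ - Q Z₀ * Q Z₁) * ∏ δ : Fin k → Bool, H (sel δ Z₀ Z₁)| := by
        rw [cubeNorm_comp_eq_sum, cubeNorm_eq_sum H, ← sum_sub_distrib]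
        simp only [← sum_sub_distrib, sub_mul, P, Q]
    _ ≤ ∑ Z₀, ∑ Z₁, |P Z₀ * P Z₁ - Q Z₀ * Q Z₁| := by
        refine (abs_sum_le_sum_abs _ _).trans (sum_le_sum fun Z₀ _ => ?_)
        refine (abs_sum_le_sum_abs _ _).trans (sum_le_sum fun Z₁ _ => ?_)
        rw [abs_mul]
        exact mul_le_of_le_one_right (abs_nonneg _) (hD Z₀ Z₁)
    _ ≤ ∑ Z, |P Z - Q Z| + ∑ Z, |P Z - Q Z| :=
        sum_sum_abs_mul_sub_mul_le unif_mem_stdSimplex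
          (push_mem_stdSimplex _ unif_mem_stdSimplex)
    _ ≤ 4 * k * ε := by linarith [sum_abs_push_pi_sub_unif_le e he]

end CubeNormComp

lemma partyNorm_eq_cubeNorm (m b : ℕ) (g : (Fin m → Fin b → ZMod 2) → ZMod 2) :
    partyNorm m b g = cubeNorm m fun X => pm1 (g X) := by
  simp only [partyNorm, cubeNorm, Fintype.expect_eq_sum_div_card, pm1_sum, sum_div,
    div_div, sq]
  rfl

lemma corr_eq_abs_expect {α : Type*} [Fintype α] (F G : α → ZMod 2) :
    corr F G = |𝔼 x, pm1 (F x) * pm1 (G x)| := by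
  simp only [corr, Fintype.expect_eq_sum_div_card, pm1_add]

lemma abs_expect_mul_pm1_le_of_mixture {α ι : Type*} [Fintype α] [Nonempty α] [Fintype ι]
    {h : α → ℝ} (hh : ∀ x, |h x| ≤ 1) {g : α → ZMod 2} {o : ι → α → ZMod 2} {μ : ι → ℝ}
    (hμ : μ ∈ stdSimplex ℝ ι) {γ B : ℝ}
    (herr : ∀ x, ∑ i, (if o i x ≠ g x then μ i else 0) ≤ γ)
    (hB : ∀ i, |𝔼 x, h x * pm1 (o i x)| ≤ B) :
    |𝔼 x, h x * pm1 (g x)| ≤ 2 * γ + B := by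
  have hsplit : 𝔼 x, h x * pm1 (g x) = (∑ i, μ i * 𝔼 x, h x * pm1 (o i x)) +
      𝔼 x, ∑ i, μ i * (h x * (pm1 (g x) - pm1 (o i x))) := by
    simp only [mul_expect, ← expect_sum_comm, ← expect_add_distrib,
      ← sum_add_distrib, ← mul_add, add_sub_cancel, ← sum_mul, hμ.2, one_mul]
  have hpoint : ∀ x, |∑ i, μ i * (h x * (pm1 (g x) - pm1 (o i x)))| ≤ 2 * γ := fun x => by
    refine (abs_sum_le_sum_abs _ _).trans ?_
    calc ∑ i, |μ i * (h x * (pm1 (g x) - pm1 (o i x)))|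
        ≤ ∑ i, 2 * (if o i x ≠ g x then μ i else 0) := by
          refine sum_le_sum fun i _ => ?_
          rw [abs_mul, abs_mul, abs_of_nonneg (hμ.1 i), abs_pm1_sub_pm1]
          by_cases hi : o i x = g x
          · simp [hi]
          · simp only [hi, Ne.symm hi, if_false, ne_eq, not_false_eq_true, if_true]
            nlinarith [hh x, hμ.1 i, abs_nonneg (h x)]
      _ ≤ 2 * γ := by rw [← mul_sum]; linarith [herr x]
  calc |𝔼 x, h x * pm1 (g x)|
      ≤ ∑ i, |μ i * 𝔼 x, h x * pm1 (o i x)| +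
          𝔼 x, |∑ i, μ i * (h x * (pm1 (g x) - pm1 (o i x)))| := by
        rw [hsplit]
        exact (abs_add_le _ _).trans (add_le_add (abs_sum_le_sum_abs _ _)
          (abs_expect_le _ _))
    _ ≤ ∑ i, μ i * B + 𝔼 _x : α, 2 * γ := by
        gcongr with i _ x _
        · rw [abs_mul, abs_of_nonneg (hμ.1 i)]
          exact mul_le_mul_of_nonneg_left (hB i) (hμ.1 i)
        · exact hpoint x
    _ = 2 * γ + B := by rw [← sum_mul, hμ.2, Fintype.expect_const]; ring

open Classical in
theorem stmt11_general
    (N a m k' c : ℕ)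
    (ε' γ : ℝ)
    (Ext : (Fin N → ZMod 2) → (Fin a → ZMod 2)) (hExt : OBFExtractor Ext k' ε')
    (f : (Fin (m + 1) → (Fin a → ZMod 2)) → ZMod 2)
    (ρ : Fin (m + 1) → Fin N → Option (ZMod 2))
    (hρ : ∀ i, k' ≤ (Finset.univ.filter (fun j => ρ i j = none)).card)
    (g : (Fin (m + 1) → (Fin N → ZMod 2)) → ZMod 2)
    (hprot : ∃ (M : ℕ) (μ : Fin M → ℝ) (P : Fin M → NOF (m + 1) N c),
      (∀ i, 0 ≤ μ i) ∧ (∑ i, μ i = 1) ∧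
      ∀ X : Fin (m + 1) → (Fin N → ZMod 2),
        (∑ i : Fin M,
            if (P i).out X ≠ g (fun i' j => (ρ i' j).getD (X i' j)) then μ i else 0)
          ≤ γ) :
    corr
      (fun X : Fin (m + 1) → (Fin N → ZMod 2) => f (fun i => Ext (fill (ρ i) (X i))))
      (fun X : Fin (m + 1) → (Fin N → ZMod 2) => g (fun i j => (ρ i j).getD (X i j)))
    ≤ 2 * γ + (2:ℝ) ^ c *
        (partyNorm (m + 1) a f + 4 * ((m : ℝ) + 1) * ε') ^ ((1:ℝ) / 2 ^ (m + 1)) := by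
  obtain ⟨M, μ, P, hμ0, hμ1, herr⟩ := hprot
  set F : (Fin (m + 1) → Fin N → ZMod 2) → ℝ := fun X => pm1 (f fun i => Ext (fill (ρ i) (X i)))
  have hcube : cubeNorm (m + 1) F ≤ partyNorm (m + 1) a f + 4 * ((m : ℝ) + 1) * ε' := by
    have hExt' := abs_cubeNorm_comp_sub_le (fun Z => pm1 (f Z)) (fun _ => (abs_pm1 _).le)
      (fun i x => Ext (fill (ρ i) x)) fun i => hExt _ (hρ i)
    rw [partyNorm_eq_cubeNorm]
    push_cast at hExt'
    linarith [le_abs_self (cubeNorm (m + 1) F - cubeNorm (m + 1) fun X => pm1 (f X))]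
  rw [corr_eq_abs_expect]
  refine abs_expect_mul_pm1_le_of_mixture (fun _ => (abs_pm1 _).le) ⟨hμ0, hμ1⟩ herr fun i => ?_
  refine ((P i).abs_expect_mul_pm1_out_le F).trans ?_
  gcongr
  exact cubeNorm_nonneg F

open Classical in
theorem stmt11
    (N a m k' c : ℕ) (hN : 0 < N) (ha : 0 < a) (hm : 0 < m) (hk' : 0 < k') (hc : 0 < c)
    (ε' γ : ℝ) (hε' : 0 ≤ ε') (hγ0 : 0 ≤ γ) (hγ1 : γ ≤ 1)
    (Ext : (Fin N → ZMod 2) → (Fin a → ZMod 2)) (hExt : OBFExtractor Ext k' ε')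
    (f : (Fin (m + 1) → (Fin a → ZMod 2)) → ZMod 2)
    (ρ : Fin (m + 1) → Fin N → Option (ZMod 2))
    (hρ : ∀ i, k' ≤ (Finset.univ.filter (fun j => ρ i j = none)).card)
    (g : (Fin (m + 1) → (Fin N → ZMod 2)) → ZMod 2)
    (hprot : ∃ (M : ℕ) (μ : Fin M → ℝ) (P : Fin M → NOF (m + 1) N c),
      (∀ i, 0 ≤ μ i) ∧ (∑ i, μ i = 1) ∧
      ∀ X : Fin (m + 1) → (Fin N → ZMod 2),
        (∑ i : Fin M,
            if (P i).out X ≠ g (fun i' j => (ρ i' j).getD (X i' j)) then μ i else 0)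
          ≤ γ) :
    corr
      (fun X : Fin (m + 1) → (Fin N → ZMod 2) => f (fun i => Ext (fill (ρ i) (X i))))
      (fun X : Fin (m + 1) → (Fin N → ZMod 2) => g (fun i j => (ρ i j).getD (X i j)))
    ≤ 2 * γ + (2:ℝ) ^ c *
        (partyNorm (m + 1) a f + 4 * ((m : ℝ) + 1) * ε') ^ ((1:ℝ) / 2 ^ (m + 1)) :=
  stmt11_general N a m k' c ε' γ Ext hExt f ρ hρ g hprot
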